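/- arXiv:2103.14264 — 3 statements merged into one kernel-verified Lean document; each statement's English description precedes it below -/
import Mathlib

section
/- Let n, p ∈ ℕ, let A be a real n×n matrix, B a real n×p matrix, μ ∈ ℝ, and let M be a real symmetric n×n matrix. Define ψ : ℝⁿ × ℝⁿ × ℝ → ℝ by ψ(x, x̃, t) = (x−x̃)ᵀ M (x−x̃) · e^{μt}. If M is positive definite and AᵀM + MA + μM is negative semidefinite, then: (i) ψ(x, x̃, t) > 0 for all x ≠ x̃ and all t; (ii) ψ(x, x, t) = 0 for all x and all t; and (iii) for every x, x̃ ∈ ℝⁿ, t ∈ ℝ, and u ∈ ℝᵖ, the derivative at s = 0 of the function s ↦ ψ(x + s(Ax + Bu), x̃ + s(Ax̃ + Bu), t + s) is ≤ 0 (equivalently, 2(x−x̃)ᵀM(Ax+Bu)e^{μt} − 2(x−x̃)ᵀM(Ax̃+Bu)e^{μt} + μ(x−x̃)ᵀM(x−x̃)e^{μt} ≤ 0). (Paper's Proposition 1: ψ is a time-varying control autobisimulation function of the nominal linear system dx* = (Ax* + Bu)dt.) -/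
open Matrix

section QuadraticForm

variable {ι : Type*} [Fintype ι] {M : Matrix ι ι ℝ}

theorem Matrix.IsSymm.dotProduct_mulVec_comm (hM : M.IsSymm) (v w : ι → ℝ) :
    v ⬝ᵥ (M *ᵥ w) = w ⬝ᵥ (M *ᵥ v) := by
  rw [dotProduct_mulVec, ← mulVec_transpose, hM, dotProduct_comm]

theorem Matrix.IsSymm.dotProduct_mulVec_add_smul (hM : M.IsSymm) (v w : ι → ℝ) (s : ℝ) :
    (v + s • w) ⬝ᵥ (M *ᵥ (v + s • w)) =
      v ⬝ᵥ (M *ᵥ v) + 2 * (v ⬝ᵥ (M *ᵥ w)) * s + w ⬝ᵥ (M *ᵥ w) * s ^ 2 := by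
  simp only [mulVec_add, mulVec_smul, dotProduct_add, add_dotProduct, dotProduct_smul,
    smul_dotProduct, smul_eq_mul, hM.dotProduct_mulVec_comm w v]
  ring

theorem Matrix.IsSymm.hasDerivAt_dotProduct_mulVec_add_smul_mul_exp (hM : M.IsSymm)
    (v w : ι → ℝ) (μ t : ℝ) :
    HasDerivAt (fun s : ℝ => (v + s • w) ⬝ᵥ (M *ᵥ (v + s • w)) * Real.exp (μ * (t + s)))
      ((2 * (v ⬝ᵥ (M *ᵥ w)) + μ * (v ⬝ᵥ (M *ᵥ v))) * Real.exp (μ * t)) 0 := by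
  have hquad : HasDerivAt (fun s : ℝ => (v + s • w) ⬝ᵥ (M *ᵥ (v + s • w)))
      (2 * (v ⬝ᵥ (M *ᵥ w))) 0 := by
    simp only [hM.dotProduct_mulVec_add_smul]
    have := (((hasDerivAt_id (0 : ℝ)).const_mul (2 * (v ⬝ᵥ (M *ᵥ w)))).const_add
      (v ⬝ᵥ (M *ᵥ v))).add ((hasDerivAt_pow 2 (0 : ℝ)).const_mul (w ⬝ᵥ (M *ᵥ w)))
    simpa [Pi.add_def] using this
  have hexp : HasDerivAt (fun s : ℝ => Real.exp (μ * (t + s))) (Real.exp (μ * t) * μ) 0 := by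
    simpa using (((hasDerivAt_id (0 : ℝ)).const_add t).const_mul μ).exp
  refine (hquad.mul hexp).congr_deriv ?_
  simp only [zero_smul, add_zero]
  ring

theorem Matrix.IsSymm.dotProduct_lyapunov_mulVec (hM : M.IsSymm) (A : Matrix ι ι ℝ) (μ : ℝ)
    (v : ι → ℝ) :
    v ⬝ᵥ ((Aᵀ * M + M * A + μ • M) *ᵥ v) =
      2 * (v ⬝ᵥ (M *ᵥ (A *ᵥ v))) + μ * (v ⬝ᵥ (M *ᵥ v)) := by
  rw [add_mulVec, add_mulVec, ← mulVec_mulVec, ← mulVec_mulVec, dotProduct_add, dotProduct_add,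
    dotProduct_mulVec v Aᵀ, vecMul_transpose,
    hM.dotProduct_mulVec_comm (A *ᵥ v), smul_mulVec, dotProduct_smul, smul_eq_mul]
  ring

end QuadraticForm

theorem stmt0_general {n p : ℕ} (A : Matrix (Fin n) (Fin n) ℝ) (B : Matrix (Fin n) (Fin p) ℝ)
    (μ : ℝ) (M : Matrix (Fin n) (Fin n) ℝ)
    (ψ : (Fin n → ℝ) → (Fin n → ℝ) → ℝ → ℝ)
    (hψ : ∀ (x xx : Fin n → ℝ) (t : ℝ),
      ψ x xx t = (x - xx) ⬝ᵥ (M *ᵥ (x - xx)) * Real.exp (μ * t))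
    (hMpd : M.PosDef)
    (hnsd : ∀ v : Fin n → ℝ, v ⬝ᵥ ((Aᵀ * M + M * A + μ • M) *ᵥ v) ≤ 0) :
    (∀ (x xx : Fin n → ℝ) (t : ℝ), x ≠ xx → 0 < ψ x xx t) ∧
    (∀ (x : Fin n → ℝ) (t : ℝ), ψ x x t = 0) ∧
    (∀ (x xx : Fin n → ℝ) (t : ℝ) (u : Fin p → ℝ),
      HasDerivAt
        (fun s : ℝ => ψ (x + s • (A *ᵥ x + B *ᵥ u)) (xx + s • (A *ᵥ xx + B *ᵥ u)) (t + s))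
        (2 * ((x - xx) ⬝ᵥ (M *ᵥ (A *ᵥ x + B *ᵥ u))) * Real.exp (μ * t)
          - 2 * ((x - xx) ⬝ᵥ (M *ᵥ (A *ᵥ xx + B *ᵥ u))) * Real.exp (μ * t)
          + μ * ((x - xx) ⬝ᵥ (M *ᵥ (x - xx))) * Real.exp (μ * t)) 0 ∧
      2 * ((x - xx) ⬝ᵥ (M *ᵥ (A *ᵥ x + B *ᵥ u))) * Real.exp (μ * t)
          - 2 * ((x - xx) ⬝ᵥ (M *ᵥ (A *ᵥ xx + B *ᵥ u))) * Real.exp (μ * t)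
          + μ * ((x - xx) ⬝ᵥ (M *ᵥ (x - xx))) * Real.exp (μ * t) ≤ 0) := by
  have hM : M.IsSymm := isHermitian_iff_isSymm.mp hMpd.isHermitian
  refine ⟨fun x xx t hne => ?_, fun x t => by simp [hψ], fun x xx t u => ?_⟩
  · rw [hψ]
    have := hMpd.dotProduct_mulVec_pos (sub_ne_zero.mpr hne)
    simp only [star_trivial] at this
    positivity
  -- Both trajectories are driven by the same input, so their difference moves along `A (x - xx)`.
  have hdiff : ∀ s : ℝ, x + s • (A *ᵥ x + B *ᵥ u) - (xx + s • (A *ᵥ xx + B *ᵥ u)) =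
      (x - xx) + s • A *ᵥ (x - xx) := fun s => by rw [mulVec_sub]; module
  have hrate : 2 * ((x - xx) ⬝ᵥ (M *ᵥ (A *ᵥ x + B *ᵥ u))) * Real.exp (μ * t)
        - 2 * ((x - xx) ⬝ᵥ (M *ᵥ (A *ᵥ xx + B *ᵥ u))) * Real.exp (μ * t)
        + μ * ((x - xx) ⬝ᵥ (M *ᵥ (x - xx))) * Real.exp (μ * t) =
      (x - xx) ⬝ᵥ ((Aᵀ * M + M * A + μ • M) *ᵥ (x - xx)) * Real.exp (μ * t) := by
    have hdrift : (x - xx) ⬝ᵥ (M *ᵥ (A *ᵥ x + B *ᵥ u)) - (x - xx) ⬝ᵥ (M *ᵥ (A *ᵥ xx + B *ᵥ u)) =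
        (x - xx) ⬝ᵥ (M *ᵥ (A *ᵥ (x - xx))) := by
      rw [← dotProduct_sub, ← mulVec_sub, mulVec_sub A, add_sub_add_right_eq_sub]
    rw [hM.dotProduct_lyapunov_mulVec]
    linear_combination 2 * Real.exp (μ * t) * hdrift
  rw [hrate]
  refine ⟨?_, mul_nonpos_of_nonpos_of_nonneg (hnsd _) (Real.exp_pos _).le⟩
  simp only [hψ, hdiff, hM.dotProduct_lyapunov_mulVec]
  exact hM.hasDerivAt_dotProduct_mulVec_add_smul_mul_exp _ _ μ t

/-- Paper's Proposition 1: `ψ(x, xx, t) = (x−xx)ᵀ M (x−xx) e^{μt}` is a time-varying control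
autobisimulation function of the nominal linear system `dx* = (Ax* + Bu)dt`. -/
theorem stmt0 {n p : ℕ} (A : Matrix (Fin n) (Fin n) ℝ) (B : Matrix (Fin n) (Fin p) ℝ)
    (μ : ℝ) (M : Matrix (Fin n) (Fin n) ℝ) (hMsymm : M.IsSymm)
    (ψ : (Fin n → ℝ) → (Fin n → ℝ) → ℝ → ℝ)
    (hψ : ∀ (x xx : Fin n → ℝ) (t : ℝ),
      ψ x xx t = (x - xx) ⬝ᵥ (M *ᵥ (x - xx)) * Real.exp (μ * t))
    (hMpd : M.PosDef)
    (hnsd : ∀ v : Fin n → ℝ, v ⬝ᵥ ((Aᵀ * M + M * A + μ • M) *ᵥ v) ≤ 0) :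
    (∀ (x xx : Fin n → ℝ) (t : ℝ), x ≠ xx → 0 < ψ x xx t) ∧
    (∀ (x : Fin n → ℝ) (t : ℝ), ψ x x t = 0) ∧
    (∀ (x xx : Fin n → ℝ) (t : ℝ) (u : Fin p → ℝ),
      HasDerivAt
        (fun s : ℝ => ψ (x + s • (A *ᵥ x + B *ᵥ u)) (xx + s • (A *ᵥ xx + B *ᵥ u)) (t + s))
        (2 * ((x - xx) ⬝ᵥ (M *ᵥ (A *ᵥ x + B *ᵥ u))) * Real.exp (μ * t)
          - 2 * ((x - xx) ⬝ᵥ (M *ᵥ (A *ᵥ xx + B *ᵥ u))) * Real.exp (μ * t)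
          + μ * ((x - xx) ⬝ᵥ (M *ᵥ (x - xx))) * Real.exp (μ * t)) 0 ∧
      2 * ((x - xx) ⬝ᵥ (M *ᵥ (A *ᵥ x + B *ᵥ u))) * Real.exp (μ * t)
          - 2 * ((x - xx) ⬝ᵥ (M *ᵥ (A *ᵥ xx + B *ᵥ u))) * Real.exp (μ * t)
          + μ * ((x - xx) ⬝ᵥ (M *ᵥ (x - xx))) * Real.exp (μ * t) ≤ 0) :=
  stmt0_general A B μ M ψ hψ hMpd hnsd
end

section
/- Let A be a real n×n matrix, B a real n×p matrix, u : ℝ → ℝᵖ continuous, M a real symmetric n×n matrix, and μ ∈ ℝ with AᵀM + MA + μM negative semidefinite. Suppose x, y : ℝ → ℝⁿ are differentiable with x′(t) = A x(t) + B u(t) and y′(t) = A y(t) + B u(t) for all t. Then for all t ≥ 0, (x(t) − y(t))ᵀ M (x(t) − y(t)) ≤ e^{−μt} · (x(0) − y(0))ᵀ M (x(0) − y(0)). In particular, if x(0) lies in the ellipsoid B_M(y(0), r) = {v : (y(0) − v)ᵀM(y(0) − v) ≤ r}, then x(t) ∈ B_M(y(t), r e^{−μt}) for all t ≥ 0. 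-/
/-!
The deviation `e = x - y` solves the autonomous system `e' = A e`, since the input cancels.
Along it, `V = eᵀ M e` has `V' = eᵀ (AᵀM + MA) e ≤ -μ V`, so `exp (μ t) * V t` is antitone.
-/

open Matrix

section Derivatives

variable {𝕜 : Type*} [NontriviallyNormedField 𝕜] {ι : Type*} [Fintype ι]
  {f g : 𝕜 → ι → 𝕜} {f' g' : ι → 𝕜} {t : 𝕜}

theorem HasDerivAt.dotProduct (hf : HasDerivAt f f' t) (hg : HasDerivAt g g' t) :
    HasDerivAt (fun s => f s ⬝ᵥ g s) (f' ⬝ᵥ g t + f t ⬝ᵥ g') t := by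
  have hfi := hasDerivAt_pi.1 hf
  have hgi := hasDerivAt_pi.1 hg
  simpa only [_root_.dotProduct, Finset.sum_add_distrib] using
    HasDerivAt.fun_sum fun i (_ : i ∈ Finset.univ) => (hfi i).fun_mul (hgi i)

theorem HasDerivAt.const_mulVec (M : Matrix ι ι 𝕜) (hf : HasDerivAt f f' t) :
    HasDerivAt (fun s => M *ᵥ f s) (M *ᵥ f') t :=
  hasDerivAt_pi.2 fun i => by
    simpa only [mulVec, zero_dotProduct, zero_add] using (hasDerivAt_const t (M i)).dotProduct hf

end Derivatives

theorem dotProduct_mulVec_add_dotProduct_mulVec_mulVec {R ι : Type*} [CommSemiring R]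
    [Fintype ι] (A M : Matrix ι ι R) (v : ι → R) :
    (A *ᵥ v) ⬝ᵥ (M *ᵥ v) + v ⬝ᵥ (M *ᵥ (A *ᵥ v)) = v ⬝ᵥ ((Aᵀ * M + M * A) *ᵥ v) := by
  rw [add_mulVec, dotProduct_add, ← mulVec_mulVec, ← mulVec_mulVec, dotProduct_mulVec v Aᵀ,
    vecMul_transpose, dotProduct_comm]

theorem le_exp_mul_of_hasDerivAt_le {V V' : ℝ → ℝ} {μ : ℝ} (hV : ∀ t, HasDerivAt V (V' t) t)
    (hV' : ∀ t, V' t ≤ -μ * V t) {t : ℝ} (ht : 0 ≤ t) :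
    V t ≤ Real.exp (-(μ * t)) * V 0 := by
  have hanti : Antitone fun s => Real.exp (μ * s) * V s := by
    refine antitone_of_hasDerivAt_nonpos (f' := fun s => Real.exp (μ * s) * (μ * V s + V' s))
      (fun s => ?_) fun s => ?_
    · exact (((hasDerivAt_id' s).const_mul μ).exp.fun_mul (hV s)).congr_deriv (by ring)
    · exact mul_nonpos_of_nonneg_of_nonpos (Real.exp_pos _).le (by linarith [hV' s])
  have := hanti ht
  simp only [mul_zero, Real.exp_zero, one_mul] at this
  rw [Real.exp_neg, inv_mul_eq_div, le_div_iff₀ (Real.exp_pos _)]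
  linarith

theorem dotProduct_mulVec_le_exp_mul_of_hasDerivAt_mulVec {ι : Type*} [Fintype ι]
    {A M : Matrix ι ι ℝ} {μ : ℝ} (hAM : ∀ v, v ⬝ᵥ ((Aᵀ * M + M * A + μ • M) *ᵥ v) ≤ 0)
    {e : ℝ → ι → ℝ} (he : ∀ t, HasDerivAt e (A *ᵥ e t) t) {t : ℝ} (ht : 0 ≤ t) :
    e t ⬝ᵥ (M *ᵥ e t) ≤ Real.exp (-(μ * t)) * (e 0 ⬝ᵥ (M *ᵥ e 0)) := by
  have hV : ∀ s, HasDerivAt (fun s => e s ⬝ᵥ (M *ᵥ e s))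
      (e s ⬝ᵥ ((Aᵀ * M + M * A) *ᵥ e s)) s := fun s => by
    simpa only [dotProduct_mulVec_add_dotProduct_mulVec_mulVec] using
      (he s).dotProduct ((he s).const_mulVec M)
  refine le_exp_mul_of_hasDerivAt_le hV (fun s => ?_) ht
  have := hAM (e s)
  rw [add_mulVec _ _ (e s), dotProduct_add, smul_mulVec, dotProduct_smul, smul_eq_mul] at this
  linarith

theorem stmt2_general {n p : ℕ} (A : Matrix (Fin n) (Fin n) ℝ) (B : Matrix (Fin n) (Fin p) ℝ)
    (u : ℝ → Fin p → ℝ)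
    (M : Matrix (Fin n) (Fin n) ℝ) (μ : ℝ)
    (hnsd : ∀ v : Fin n → ℝ, v ⬝ᵥ ((Aᵀ * M + M * A + μ • M) *ᵥ v) ≤ 0)
    (x y : ℝ → Fin n → ℝ)
    (hx : ∀ t : ℝ, HasDerivAt x (A *ᵥ x t + B *ᵥ u t) t)
    (hy : ∀ t : ℝ, HasDerivAt y (A *ᵥ y t + B *ᵥ u t) t) :
    (∀ t : ℝ, 0 ≤ t →
      (x t - y t) ⬝ᵥ (M *ᵥ (x t - y t)) ≤
        Real.exp (-(μ * t)) * ((x 0 - y 0) ⬝ᵥ (M *ᵥ (x 0 - y 0)))) ∧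
    (∀ r : ℝ, x 0 ∈ {v : Fin n → ℝ | (y 0 - v) ⬝ᵥ (M *ᵥ (y 0 - v)) ≤ r} →
      ∀ t : ℝ, 0 ≤ t →
        x t ∈ {v : Fin n → ℝ | (y t - v) ⬝ᵥ (M *ᵥ (y t - v)) ≤ r * Real.exp (-(μ * t))}) := by
  have he : ∀ t, HasDerivAt (fun s => x s - y s) (A *ᵥ (x t - y t)) t := fun t => by
    simpa only [mulVec_sub, add_sub_add_right_eq_sub] using (hx t).fun_sub (hy t)
  have hdecay := fun t => dotProduct_mulVec_le_exp_mul_of_hasDerivAt_mulVec hnsd he (t := t)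
  refine ⟨hdecay, fun r hr t ht => ?_⟩
  have hswap : ∀ s, (y s - x s) ⬝ᵥ (M *ᵥ (y s - x s)) = (x s - y s) ⬝ᵥ (M *ᵥ (x s - y s)) :=
    fun s => by rw [← neg_sub, mulVec_neg, dotProduct_neg, neg_dotProduct, neg_neg]
  change (y t - x t) ⬝ᵥ (M *ᵥ (y t - x t)) ≤ r * Real.exp (-(μ * t))
  rw [hswap, mul_comm]
  exact (hdecay t ht).trans <|
    mul_le_mul_of_nonneg_left ((hswap 0).symm.trans_le hr) (Real.exp_pos _).le

/-- Contraction of the ellipsoidal deviation between two trajectories of the same linear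
control system `x' = Ax + Bu(t)` under the LMI `AᵀM + MA + μM ⪯ 0`. -/
theorem stmt2 {n p : ℕ} (A : Matrix (Fin n) (Fin n) ℝ) (B : Matrix (Fin n) (Fin p) ℝ)
    (u : ℝ → Fin p → ℝ) (hu : Continuous u)
    (M : Matrix (Fin n) (Fin n) ℝ) (hM : M.IsSymm) (μ : ℝ)
    (hnsd : ∀ v : Fin n → ℝ, v ⬝ᵥ ((Aᵀ * M + M * A + μ • M) *ᵥ v) ≤ 0)
    (x y : ℝ → Fin n → ℝ)
    (hx : ∀ t : ℝ, HasDerivAt x (A *ᵥ x t + B *ᵥ u t) t)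
    (hy : ∀ t : ℝ, HasDerivAt y (A *ᵥ y t + B *ᵥ u t) t) :
    (∀ t : ℝ, 0 ≤ t →
      (x t - y t) ⬝ᵥ (M *ᵥ (x t - y t)) ≤
        Real.exp (-(μ * t)) * ((x 0 - y 0) ⬝ᵥ (M *ᵥ (x 0 - y 0)))) ∧
    (∀ r : ℝ, x 0 ∈ {v : Fin n → ℝ | (y 0 - v) ⬝ᵥ (M *ᵥ (y 0 - v)) ≤ r} →
      ∀ t : ℝ, 0 ≤ t →
        x t ∈ {v : Fin n → ℝ | (y t - v) ⬝ᵥ (M *ᵥ (y t - v)) ≤ r * Real.exp (-(μ * t))}) :=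
  stmt2_general A B u M μ hnsd x y hx hy
end

section
/- Let M be a real symmetric n×n matrix, a ∈ ℝⁿ, c ∈ ℝᵖ, z > 0, γ ≥ 0, r ≥ 0, b ∈ ℝ, μ ∈ ℝ, and t ≥ 0 with μ·t ≥ 0. Suppose z² a aᵀ ⪯ M. If ξ, ξ̃*, ξ* ∈ ℝⁿ and u ∈ ℝᵖ satisfy (ξ − ξ̃*)ᵀ M (ξ − ξ̃*) ≤ γ e^{−μt}, (ξ̃* − ξ*)ᵀ M (ξ̃* − ξ*) ≤ r e^{−μt}, and aᵀ ξ* + cᵀ u < b − (√γ + √r) e^{−μt/2} / z, then aᵀ ξ + cᵀ u < b. -/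
/-!
Positive semidefiniteness of `M - z² a aᵀ` says `z² (aᵀw)² ≤ wᵀMw`, so an `M`-ellipsoid of
radius `ε` lies in the slab `|aᵀw| ≤ ε / z`. Applying this to `ξ - ξ̃*` and `ξ̃* - ξ*`, with
`ε = √γ e^{-μt/2}` and `ε = √r e^{-μt/2}`, the triangle inequality moves `aᵀξ` at most
`(√γ + √r) e^{-μt/2} / z` away from `aᵀξ*`, which is exactly the margin of the tightened predicate.
-/

open Matrix

theorem dotProduct_sub_smul_vecMulVec_mulVec {ι R : Type*} [Fintype ι] [CommRing R]
    (M : Matrix ι ι R) (s : R) (a w : ι → R) :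
    w ⬝ᵥ ((M - s • vecMulVec a a) *ᵥ w) = w ⬝ᵥ (M *ᵥ w) - s * (a ⬝ᵥ w) ^ 2 := by
  rw [sub_mulVec, dotProduct_sub, smul_mulVec, dotProduct_smul, vecMulVec_mulVec,
    op_smul_eq_smul, dotProduct_smul, dotProduct_comm w a, smul_eq_mul, smul_eq_mul]
  ring

theorem dotProduct_le_div_of_quadForm_le {ι : Type*} [Fintype ι] {M : Matrix ι ι ℝ}
    {a w : ι → ℝ} {z ε : ℝ} (hz : 0 < z) (hε : 0 ≤ ε)
    (hpsd : 0 ≤ w ⬝ᵥ ((M - z ^ 2 • vecMulVec a a) *ᵥ w)) (hw : w ⬝ᵥ (M *ᵥ w) ≤ ε ^ 2) :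
    a ⬝ᵥ w ≤ ε / z := by
  rw [dotProduct_sub_smul_vecMulVec_mulVec] at hpsd
  have hsq : (z * (a ⬝ᵥ w)) ^ 2 ≤ ε ^ 2 := by nlinarith
  rw [le_div_iff₀' hz]
  exact le_of_sq_le_sq hsq hε

theorem sqrt_mul_exp_half_sq {γ : ℝ} (hγ : 0 ≤ γ) (x : ℝ) :
    (√γ * Real.exp (x / 2)) ^ 2 = γ * Real.exp x := by
  rw [mul_pow, Real.sq_sqrt hγ, Real.exp_half, Real.sq_sqrt (Real.exp_pos x).le]

theorem stmt5_general {n p : ℕ} (M : Matrix (Fin n) (Fin n) ℝ)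
    (a : Fin n → ℝ) (c : Fin p → ℝ) (z γ r b μ t : ℝ)
    (hz : 0 < z) (hγ : 0 ≤ γ) (hr : 0 ≤ r)
    (hpsd : ∀ w : Fin n → ℝ, 0 ≤ w ⬝ᵥ ((M - z ^ 2 • vecMulVec a a) *ᵥ w))
    (ξ ξps ξs : Fin n → ℝ) (u : Fin p → ℝ)
    (h1 : (ξ - ξps) ⬝ᵥ (M *ᵥ (ξ - ξps)) ≤ γ * Real.exp (-(μ * t)))
    (h2 : (ξps - ξs) ⬝ᵥ (M *ᵥ (ξps - ξs)) ≤ r * Real.exp (-(μ * t)))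
    (h3 : a ⬝ᵥ ξs + c ⬝ᵥ u <
      b - (Real.sqrt γ + Real.sqrt r) * Real.exp (-(μ * t) / 2) / z) :
    a ⬝ᵥ ξ + c ⬝ᵥ u < b := by
  set E := Real.exp (-(μ * t) / 2)
  have hstoch : a ⬝ᵥ (ξ - ξps) ≤ √γ * E / z :=
    dotProduct_le_div_of_quadForm_le hz (by positivity) (hpsd _)
      (h1.trans_eq (sqrt_mul_exp_half_sq hγ _).symm)
  have hpert : a ⬝ᵥ (ξps - ξs) ≤ √r * E / z :=
    dotProduct_le_div_of_quadForm_le hz (by positivity) (hpsd _)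
      (h2.trans_eq (sqrt_mul_exp_half_sq hr _).symm)
  rw [dotProduct_sub] at hstoch hpert
  have hsplit : (√γ + √r) * E / z = √γ * E / z + √r * E / z := by ring
  linarith

/-- Deterministic core of the paper's Theorem 1: satisfaction of the robustly modified
predicate by the nominal point, together with the two time-decaying ellipsoidal deviation
bounds, implies satisfaction of the original predicate `aᵀξ + cᵀu < b` by the stochastic
trajectory point. -/
theorem stmt5 {n p : ℕ} (M : Matrix (Fin n) (Fin n) ℝ) (hM : M.IsSymm)
    (a : Fin n → ℝ) (c : Fin p → ℝ) (z γ r b μ t : ℝ)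
    (hz : 0 < z) (hγ : 0 ≤ γ) (hr : 0 ≤ r) (ht : 0 ≤ t) (hμt : 0 ≤ μ * t)
    (hpsd : ∀ w : Fin n → ℝ, 0 ≤ w ⬝ᵥ ((M - z ^ 2 • vecMulVec a a) *ᵥ w))
    (ξ ξps ξs : Fin n → ℝ) (u : Fin p → ℝ)
    (h1 : (ξ - ξps) ⬝ᵥ (M *ᵥ (ξ - ξps)) ≤ γ * Real.exp (-(μ * t)))
    (h2 : (ξps - ξs) ⬝ᵥ (M *ᵥ (ξps - ξs)) ≤ r * Real.exp (-(μ * t)))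
    (h3 : a ⬝ᵥ ξs + c ⬝ᵥ u <
      b - (Real.sqrt γ + Real.sqrt r) * Real.exp (-(μ * t) / 2) / z) :
    a ⬝ᵥ ξ + c ⬝ᵥ u < b :=
  stmt5_general M a c z γ r b μ t hz hγ hr hpsd ξ ξps ξs u h1 h2 h3
end
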